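/- arXiv:2305.04178 — 2 statements merged into one kernel-verified Lean document; each statement's English description precedes it below -/
import Mathlib

section
/- Let μ = (μ₁,…,μ_s) be a partition of n with s ≥ 2, and let 2 ≤ i ≤ s with μ_{i-1} > μ_i. Then f(μ↑_i − 1̂) ≥ f(μ − 1̂), with equality if and only if μ₁ = 3, μ_t = 2 for 2 ≤ t ≤ i−1, and μ_t = 1 for i ≤ t ≤ s. -/
/-- The odd double factorial `(2k-1)!! = 1 * 3 * ... * (2k-1)`, with `odf 0 = 1`. -/
def odf (k : Nat) : Int := ∏ j ∈ Finset.Icc 1 k, (2 * (j : Int) - 1)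

/-- Subtract `k` from every part, deleting parts that become zero. -/
def subHat (k : Nat) (l : List Nat) : List Nat :=
  (l.map (fun x => x - k)).filter (fun x => x ≠ 0)

/-- `l` is a partition: a non-increasing list of positive integers. -/
def IsPartition (l : List Nat) : Prop := l.Chain' (· ≥ ·) ∧ ∀ x ∈ l, 0 < x

/-- Increase the `i`-th part (1-based indexing). -/
def upAt (i : Nat) (l : List Nat) : List Nat := l.set (i - 1) (l.getD (i - 1) 0 + 1)

/-- Decrease the `j`-th part (1-based indexing), deleting it if it becomes zero. -/
def downAt (j : Nat) (l : List Nat) : List Nat :=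
  (l.set (j - 1) (l.getD (j - 1) 0 - 1)).filter (fun x => x ≠ 0)

/-!
Write `μ = A ++ b :: B` with `b = μ_i`, so every part of `A` exceeds `b`. The recursion shows that
`f` is nonnegative on partitions and vanishes only at `[1]`. Raising such a part `b` to `b + 1`
strictly increases `f`: with no parts after `b`, Pascal's rule leaves a sum with a positive term;
otherwise peel off the last part `a ≤ b`, and in the recursion each `subHat k` with `k < b` is again
such a raise, while for `k = b` the raise only appends a part `1`, which cannot decrease `f`.
If `b ≥ 2`, passing from `μ - 1̂` to `μ↑_i - 1̂` is such a raise, so the inequality is strict.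
If `b = 1`, `μ↑_i - 1̂` is `μ - 1̂` with a part `1` appended and the recursion gives the difference
`f (A - 2̂)`, which is zero exactly when `A - 2̂ = [1]`, i.e. `A = [3, 2, …, 2]`.
-/

open Finset

theorem isPartition_iff_pairwise {l : List ℕ} :
    IsPartition l ↔ l.Pairwise (· ≥ ·) ∧ ∀ x ∈ l, 0 < x := by
  rw [IsPartition, ← List.isChain_iff_pairwise]; rfl

section subHat

variable {k j x : ℕ} {l : List ℕ}

@[simp] theorem subHat_append (l₁ l₂ : List ℕ) :
    subHat k (l₁ ++ l₂) = subHat k l₁ ++ subHat k l₂ := by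
  simp [subHat]

theorem subHat_cons_of_lt (h : k < x) : subHat k (x :: l) = (x - k) :: subHat k l := by
  simp [subHat, Nat.sub_ne_zero_of_lt h]

theorem subHat_cons_of_le (h : x ≤ k) : subHat k (x :: l) = subHat k l := by
  simp [subHat, Nat.sub_eq_zero_of_le h]

theorem mem_subHat : x ∈ subHat k l ↔ ∃ y ∈ l, k < y ∧ y - k = x := by
  simp only [subHat, List.mem_filter, List.mem_map]
  grind

theorem sub_lt_of_mem_subHat {b : ℕ} (h : ∀ x ∈ l, b < x) (hx : x ∈ subHat k l) : b - k < x := by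
  obtain ⟨y, hy, hky, rfl⟩ := mem_subHat.mp hx
  have := h y hy
  omega

theorem subHat_eq_nil_iff : subHat k l = [] ↔ ∀ x ∈ l, x ≤ k := by
  simp [subHat, List.filter_eq_nil_iff, Nat.sub_eq_zero_iff_le]

theorem subHat_ne_nil (hl : l ≠ []) (h : ∀ x ∈ l, k < x) : subHat k l ≠ [] := by
  obtain ⟨x, hx⟩ := List.exists_mem_of_ne_nil l hl
  exact List.ne_nil_of_mem (mem_subHat.mpr ⟨x, hx, h x hx, rfl⟩)

theorem length_subHat_le : (subHat k l).length ≤ l.length :=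
  (List.length_filter_le _ _).trans (List.length_map _).le

theorem subHat_subHat : subHat j (subHat k l) = subHat (k + j) l := by
  induction l with
  | nil => rfl
  | cons x l ih =>
    rcases lt_or_ge k x with hkx | hxk
    · rw [subHat_cons_of_lt hkx]
      rcases lt_or_ge j (x - k) with hjx | hxj
      · rw [subHat_cons_of_lt hjx, subHat_cons_of_lt (by omega), ih, Nat.sub_sub]
      · rw [subHat_cons_of_le hxj, subHat_cons_of_le (by omega), ih]
    · rw [subHat_cons_of_le hxk, subHat_cons_of_le (by omega), ih]

theorem subHat_two_eq_singleton_one_iff {a : ℕ} {A : List ℕ} (hp : (a :: A).Pairwise (· ≥ ·))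
    (h2 : ∀ x ∈ A, 2 ≤ x) : subHat 2 (a :: A) = [1] ↔ a = 3 ∧ ∀ x ∈ A, x = 2 := by
  constructor
  · intro h
    rcases le_or_gt a 2 with ha | ha
    · rw [subHat_eq_nil_iff.mpr fun x hx => ?_] at h
      · exact absurd h (List.cons_ne_nil _ _).symm
      · rcases List.mem_cons.mp hx with rfl | hx
        exacts [ha, (List.rel_of_pairwise_cons hp hx).trans ha]
    · rw [subHat_cons_of_lt ha, List.cons_eq_cons, subHat_eq_nil_iff] at h
      exact ⟨by omega, fun x hx => le_antisymm (h.2 x hx) (h2 x hx)⟩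
  · rintro ⟨rfl, hA⟩
    rw [subHat_cons_of_lt (by norm_num), subHat_eq_nil_iff.mpr fun x hx => (hA x hx).le]

end subHat

namespace IsPartition

variable {l l₁ l₂ A B : List ℕ} {b x : ℕ}

theorem pos (h : IsPartition l) (hx : x ∈ l) : 0 < x :=
  (isPartition_iff_pairwise.mp h).2 x hx

theorem le_of_mem_of_append_cons (h : IsPartition (A ++ b :: B)) (hx : x ∈ B) : x ≤ b :=
  List.rel_of_pairwise_cons (List.pairwise_append.mp (isPartition_iff_pairwise.mp h).1).2.1 hx

theorem of_append_left (h : IsPartition (l₁ ++ l₂)) : IsPartition l₁ := by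
  rw [isPartition_iff_pairwise] at h ⊢
  exact ⟨h.1.sublist (List.sublist_append_left _ _), fun x hx => h.2 x (List.mem_append_left _ hx)⟩

theorem append_one (h : IsPartition l) : IsPartition (l ++ [1]) := by
  rw [isPartition_iff_pairwise] at h ⊢
  simp only [List.pairwise_append, List.pairwise_singleton, List.mem_singleton, List.mem_append]
  grind

theorem bump (h : IsPartition (A ++ b :: B)) (hA : ∀ x ∈ A, b < x) :
    IsPartition (A ++ (b + 1) :: B) := by
  rw [isPartition_iff_pairwise] at h ⊢
  simp only [List.pairwise_append, List.pairwise_cons, List.mem_cons, List.mem_append] at h ⊢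
  grind

theorem forall_mem_cons_eq_one_iff (h : IsPartition (A ++ b :: B)) :
    (∀ x ∈ b :: B, x = 1) ↔ b = 1 := by
  refine ⟨fun h1 => h1 b List.mem_cons_self, fun hb x hx => ?_⟩
  have hpos : 0 < x := h.pos (List.mem_append_right A hx)
  rcases List.mem_cons.mp hx with rfl | hx
  · exact hb
  · have := h.le_of_mem_of_append_cons hx
    omega

theorem subHat (h : IsPartition l) (k : ℕ) : IsPartition (_root_.subHat k l) := by
  rw [isPartition_iff_pairwise] at h ⊢
  refine ⟨(h.1.map _ fun a b (hab : a ≥ b) => Nat.sub_le_sub_right hab k).filter _, fun x hx => ?_⟩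
  obtain ⟨y, -, hky, rfl⟩ := mem_subHat.mp hx
  omega

end IsPartition

theorem sum_Icc_choose_succ_mul (b : ℕ) (T : ℕ → ℤ) :
    ∑ k ∈ Icc 1 (b + 1), ((b + 1).choose k : ℤ) * T k
      = ∑ k ∈ Icc 1 b, (b.choose k : ℤ) * T k
        + ∑ k ∈ Icc 1 (b + 1), (b.choose (k - 1) : ℤ) * T k := by
  have pascal : ∀ k ∈ Icc 1 (b + 1),
      ((b + 1).choose k : ℤ) * T k = (b.choose k : ℤ) * T k + (b.choose (k - 1) : ℤ) * T k := by
    intro k hk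
    obtain ⟨m, rfl⟩ : ∃ m, k = m + 1 := ⟨k - 1, by grind⟩
    rw [Nat.choose_succ_succ', Nat.add_sub_cancel]
    push_cast
    ring
  rw [sum_congr rfl pascal, sum_add_distrib, sum_Icc_succ_top (by omega), Nat.choose_succ_self]
  simp

theorem odf_pos (k : ℕ) : 0 < odf k :=
  prod_pos fun j hj => by grind

theorem pos_of_ne_one_of_recurrence {d : ℕ → ℤ} (hd0 : d 0 = 1) (hd1 : d 1 = 0)
    (hd : ∀ n : ℕ, 2 ≤ n → d n = 2 * ((n : ℤ) - 1) * (d (n - 1) + d (n - 2))) :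
    ∀ n, n ≠ 1 → 0 < d n
  | 0, _ => by rw [hd0]; exact one_pos
  | 1, h => absurd rfl h
  | 2, _ => by rw [hd 2 le_rfl]; simp [hd0, hd1]
  | n + 3, _ => by
    have h2 := pos_of_ne_one_of_recurrence hd0 hd1 hd (n + 2) (by omega)
    have h1 : 0 ≤ d (n + 1) := by
      by_cases hn : n = 0
      · simp [hn, hd1]
      · exact (pos_of_ne_one_of_recurrence hd0 hd1 hd (n + 1) (by omega)).le
    rw [hd (n + 3) (by omega)]
    exact mul_pos (by push_cast; omega) (by simpa using add_pos_of_pos_of_nonneg h2 h1)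

def SatisfiesRecursion (f : List ℕ → ℤ) : Prop :=
  ∀ l : List ℕ, IsPartition l → 2 ≤ l.length →
    f l = f l.dropLast + ∑ k ∈ Icc 1 (l.getLastD 0),
      ((l.getLastD 0).choose k : ℤ) * odf k * f (subHat k l.dropLast)

structure IsPosAwayFromOne (f : List ℕ → ℤ) : Prop where
  eq_zero : f [1] = 0
  pos : ∀ l, IsPartition l → l ≠ [1] → 0 < f l

namespace IsPosAwayFromOne

variable {f : List ℕ → ℤ} (hf : IsPosAwayFromOne f) {l : List ℕ}
include hf

theorem nonneg (hl : IsPartition l) : 0 ≤ f l := by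
  by_cases h : l = [1]
  · rw [h, hf.eq_zero]
  · exact (hf.pos l hl h).le

theorem eq_zero_iff (hl : IsPartition l) : f l = 0 ↔ l = [1] :=
  ⟨fun h => by_contra fun h1 => (hf.pos l hl h1).ne' h, fun h => h ▸ hf.eq_zero⟩

end IsPosAwayFromOne

namespace SatisfiesRecursion

variable {f : List ℕ → ℤ} (hfr : SatisfiesRecursion f) {l A B : List ℕ} {a b : ℕ}
include hfr

theorem append_singleton (hne : l ≠ []) (hl : IsPartition (l ++ [a])) :
    f (l ++ [a]) = f l + ∑ k ∈ Icc 1 a, (a.choose k : ℤ) * odf k * f (subHat k l) := by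
  simpa using hfr (l ++ [a]) hl (by simp [Nat.one_le_iff_ne_zero, hne])

theorem append_one (hne : l ≠ []) (hl : IsPartition l) : f (l ++ [1]) = f l + f (subHat 1 l) := by
  rw [hfr.append_singleton hne hl.append_one]
  simp [odf]

theorem isPosAwayFromOne (hnil : 0 < f []) (hsingle : ∀ m, m ≠ 1 → 0 < f [m])
    (hone : f [1] = 0) : IsPosAwayFromOne f := by
  refine ⟨hone, fun l => ?_⟩
  induction hn : l.length using Nat.strong_induction_on generalizing l with
  | _ n ih =>
  intro hl hl1
  rcases l.eq_nil_or_concat' with rfl | ⟨l, a, rfl⟩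
  · exact hnil
  by_cases hl0 : l = []
  · subst hl0
    exact hsingle a fun h => hl1 (by rw [h]; rfl)
  by_cases hl1' : l = [1]
  · subst hl1'
    obtain rfl : a = 1 := by
      simp [isPartition_iff_pairwise] at hl
      omega
    rw [hfr.append_one hl0 hl.of_append_left]
    simp [subHat, hone, hnil]
  have hnonneg : ∀ m, IsPartition m → m.length < n → 0 ≤ f m := fun m hm hmn => by
    by_cases hm1 : m = [1]
    · rw [hm1, hone]
    · exact (ih _ hmn m rfl hm hm1).le
  have hlen : l.length < n := by simp [← hn]
  rw [hfr.append_singleton hl0 hl]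
  have hsum : 0 ≤ ∑ k ∈ Icc 1 a, (a.choose k : ℤ) * odf k * f (subHat k l) :=
    sum_nonneg fun k _ => mul_nonneg (mul_nonneg (by positivity) (odf_pos k).le)
      (hnonneg _ (hl.of_append_left.subHat k) (length_subHat_le.trans_lt hlen))
  linarith [ih _ hlen l rfl hl.of_append_left hl1']

variable (hf : IsPosAwayFromOne f)
include hf

theorem le_append_one (hne : l ≠ []) (hl : IsPartition l) : f l ≤ f (l ++ [1]) := by
  rw [hfr.append_one hne hl]
  linarith [hf.nonneg (hl.subHat 1)]

theorem lt_append_succ (hA : A ≠ []) (hAb : ∀ x ∈ A, b < x) (hl : IsPartition (A ++ [b])) :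
    f (A ++ [b]) < f (A ++ [b + 1]) := by
  have hb : 0 < b := hl.pos (by simp)
  have hA' : IsPartition A := hl.of_append_left
  have hkey : 0 < f (subHat 1 A) ∨ 0 < f (subHat (b + 1) A) := by
    by_cases hS : subHat (b + 1) A = [1]
    · obtain ⟨y, hy, -, hyb⟩ := mem_subHat.mp (hS ▸ List.mem_singleton_self 1)
      refine Or.inl (hf.pos _ (hA'.subHat 1) fun h1 => ?_)
      have : b + 1 ∈ subHat 1 A := mem_subHat.mpr ⟨y, hy, by omega, by omega⟩
      simp [h1] at this
      omega
    · exact Or.inr (hf.pos _ (hA'.subHat _) hS)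
  rw [hfr.append_singleton hA hl, hfr.append_singleton hA (hl.bump hAb)]
  simp only [mul_assoc]
  rw [sum_Icc_choose_succ_mul b fun k => odf k * f (subHat k A)]
  have : 0 < ∑ k ∈ Icc 1 (b + 1), (b.choose (k - 1) : ℤ) * (odf k * f (subHat k A)) := by
    refine sum_pos' (fun k _ => mul_nonneg (by positivity)
      (mul_nonneg (odf_pos k).le (hf.nonneg (hA'.subHat k)))) ?_
    rcases hkey with h | h
    · exact ⟨1, by simp, by simpa using mul_pos (odf_pos 1) h⟩
    · exact ⟨b + 1, by simp, by simpa using mul_pos (odf_pos _) h⟩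
  linarith

theorem lt_bump (hA : A ≠ []) (hAb : ∀ x ∈ A, b < x) (hl : IsPartition (A ++ b :: B)) :
    f (A ++ b :: B) < f (A ++ (b + 1) :: B) := by
  induction hn : B.length using Nat.strong_induction_on generalizing A B b with
  | _ n ih =>
  rcases B.eq_nil_or_concat' with rfl | ⟨B, a, rfl⟩
  · exact hfr.lt_append_succ hf hA hAb hl
  have hbB : ∀ y ∈ B ++ [a], y ≤ b := fun y => hl.le_of_mem_of_append_cons
  have hl' : IsPartition ((A ++ b :: B) ++ [a]) := by simpa using hl
  have hlen : B.length < n := by simp [← hn]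
  have hmono : ∀ k ≤ b, f (subHat k (A ++ b :: B)) ≤ f (subHat k (A ++ (b + 1) :: B)) := by
    intro k hk
    have hkA : ∀ x ∈ subHat k A, b - k < x := fun x => sub_lt_of_mem_subHat hAb
    have hsA : subHat k A ≠ [] := subHat_ne_nil hA fun x hx => hk.trans_lt (hAb x hx)
    have hlk := hl'.of_append_left.subHat k
    rcases hk.lt_or_eq with hk | rfl
    · rw [subHat_append, subHat_cons_of_lt hk] at hlk ⊢
      rw [subHat_append, subHat_cons_of_lt (by omega), show b + 1 - k = b - k + 1 by omega]
      exact (ih _ (length_subHat_le.trans_lt hlen) hsA hkA hlk rfl).le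
    · have hB : subHat k B = [] := subHat_eq_nil_iff.mpr fun y hy => hbB y (by simp [hy])
      rw [subHat_append, subHat_cons_of_le le_rfl, hB, List.append_nil] at hlk ⊢
      rw [subHat_append, subHat_cons_of_lt (by omega), Nat.add_sub_cancel_left, hB]
      exact hfr.le_append_one hf hsA hlk
  rw [show A ++ b :: (B ++ [a]) = (A ++ b :: B) ++ [a] by simp,
    show A ++ (b + 1) :: (B ++ [a]) = (A ++ (b + 1) :: B) ++ [a] by simp,
    hfr.append_singleton (by simp) hl', hfr.append_singleton (by simp) (by simpa using hl.bump hAb)]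
  have hsum := sum_le_sum fun k (hk : k ∈ Icc 1 a) => mul_le_mul_of_nonneg_left
    (hmono k ((mem_Icc.mp hk).2.trans (hbB a (by simp))))
    (mul_nonneg (Nat.cast_nonneg (a.choose k)) (odf_pos k).le)
  linarith [ih _ hlen hA hAb hl'.of_append_left rfl]

theorem subHat_one_bump_le_and_eq_iff (hA : A ≠ []) (hAb : ∀ x ∈ A, b < x)
    (hl : IsPartition (A ++ b :: B)) :
    f (subHat 1 (A ++ b :: B)) ≤ f (subHat 1 (A ++ (b + 1) :: B)) ∧
      (f (subHat 1 (A ++ (b + 1) :: B)) = f (subHat 1 (A ++ b :: B)) ↔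
        b = 1 ∧ subHat 2 A = [1]) := by
  have hb : 0 < b := hl.pos (by simp)
  have hsA : subHat 1 A ≠ [] := subHat_ne_nil hA fun x hx => lt_of_le_of_lt hb (hAb x hx)
  have hlA : IsPartition (subHat 1 A) := hl.of_append_left.subHat 1
  rcases (show b = 1 ∨ 1 < b by omega) with rfl | hb1
  · have hB : subHat 1 B = [] := subHat_eq_nil_iff.mpr fun y => hl.le_of_mem_of_append_cons
    have key : f (subHat 1 (A ++ 2 :: B)) = f (subHat 1 (A ++ 1 :: B)) + f (subHat 2 A) := by
      simp only [subHat_append, subHat_cons_of_le le_rfl, subHat_cons_of_lt one_lt_two, hB]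
      rw [List.append_nil, show 2 - 1 = 1 from rfl, hfr.append_one hsA hlA, subHat_subHat]
    rw [key, add_eq_left, hf.eq_zero_iff (hl.of_append_left.subHat 2)]
    exact ⟨le_add_of_nonneg_right (hf.nonneg (hl.of_append_left.subHat 2)), by simp⟩
  · simp only [subHat_append, subHat_cons_of_lt hb1, subHat_cons_of_lt (by omega : 1 < b + 1),
      show b + 1 - 1 = b - 1 + 1 by omega]
    have hlt := hfr.lt_bump hf hsA (fun x => sub_lt_of_mem_subHat hAb)
      (by simpa [subHat_cons_of_lt hb1] using hl.subHat 1)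
    exact ⟨hlt.le, iff_of_false hlt.ne' (by omega)⟩

end SatisfiesRecursion

theorem IsPartition.exists_cons_append_cons {μ : List ℕ} {i : ℕ} (hμ : IsPartition μ)
    (hi2 : 2 ≤ i) (his : i ≤ μ.length) (hlt : μ.getD (i - 1) 0 < μ.getD (i - 2) 0) :
    ∃ a A b B, μ = a :: (A ++ b :: B) ∧ i = A.length + 2 ∧ ∀ x ∈ a :: A, b < x := by
  obtain ⟨a, A, b, B, rfl, rfl⟩ : ∃ a A b B, μ = a :: (A ++ b :: B) ∧ i = A.length + 2 := by
    obtain ⟨a, μ, rfl⟩ := List.exists_cons_of_length_pos (by omega : 0 < μ.length)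
    have hi : i - 2 < μ.length := by simp at his; omega
    refine ⟨a, μ.take (i - 2), μ[i - 2], μ.drop (i - 1), ?_, by simp; omega⟩
    rw [show i - 1 = i - 2 + 1 by omega, List.getElem_cons_drop, List.take_append_drop]
  refine ⟨a, A, b, B, rfl, rfl, fun x hx => ?_⟩
  have hp := (isPartition_iff_pairwise.mp (hμ.of_append_left (l₁ := a :: A))).1
  have hlast : (a :: (A ++ b :: B))[A.length] = (a :: A).getLast (List.cons_ne_nil a A) := by
    rw [List.getLast_eq_getElem]
    exact List.getElem_append_left (as := a :: A) (bs := b :: B) (by simp)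
  simp at hlt
  exact (hlast ▸ hlt).trans_le (hp.rel_getLast hx)

theorem forall_getD_eq_iff {l : List ℕ} {c : ℕ} :
    (∀ j < l.length, l.getD j 0 = c) ↔ ∀ x ∈ l, x = c := by
  rw [List.forall_mem_iff_getElem]
  exact forall_congr' fun j => forall_congr' fun hj => by rw [List.getD_eq_getElem _ _ hj]

section getD

variable {a c : ℕ} {A L : List ℕ}

theorem forall_getD_cons_append_eq_iff :
    (∀ t, 2 ≤ t → t + 1 ≤ A.length + 2 → (a :: (A ++ L)).getD (t - 1) 0 = c) ↔
      ∀ x ∈ A, x = c := by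
  rw [← forall_getD_eq_iff]
  constructor
  · intro h j hj
    have := h (j + 2) (by omega) (by omega)
    rwa [show j + 2 - 1 = j + 1 by omega, List.getD_cons_succ, List.getD_append _ _ _ _ hj] at this
  · intro h t ht2 ht
    obtain ⟨j, rfl⟩ : ∃ j, t = j + 2 := ⟨t - 2, by omega⟩
    rw [show j + 2 - 1 = j + 1 by omega, List.getD_cons_succ, List.getD_append _ _ _ _ (by omega)]
    exact h j (by omega)

theorem forall_getD_cons_append_right_eq_iff :
    (∀ t, A.length + 2 ≤ t → t ≤ (a :: (A ++ L)).length → (a :: (A ++ L)).getD (t - 1) 0 = c) ↔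
      ∀ x ∈ L, x = c := by
  rw [← forall_getD_eq_iff]
  constructor
  · intro h j hj
    have := h (A.length + 2 + j) (by omega) (by simp; omega)
    rwa [show A.length + 2 + j - 1 = A.length + j + 1 by omega, List.getD_cons_succ,
      List.getD_append_right _ _ _ _ (by omega), Nat.add_sub_cancel_left] at this
  · intro h t ht2 ht
    obtain ⟨j, rfl⟩ : ∃ j, t = A.length + 2 + j := ⟨t - (A.length + 2), by omega⟩
    rw [show A.length + 2 + j - 1 = A.length + j + 1 by omega, List.getD_cons_succ,
      List.getD_append_right _ _ _ _ (by omega), Nat.add_sub_cancel_left]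
    exact h j (by simp at ht; omega)

end getD

theorem stmt9_general
    (d : Nat → Int) (hd0 : d 0 = 1) (hd1 : d 1 = 0)
    (hd : ∀ n : Nat, 2 ≤ n → d n = 2 * ((n : Int) - 1) * (d (n - 1) + d (n - 2)))
    (f : List Nat → Int) (hf0 : f [] = 1) (hf1 : ∀ m : Nat, f [m] = d m)
    (hfr : ∀ l : List Nat, IsPartition l → 2 ≤ l.length →
      f l = f l.dropLast + ∑ k ∈ Finset.Icc 1 (l.getLastD 0),
        ((l.getLastD 0).choose k : Int) * odf k * f (subHat k l.dropLast))
    (μ : List Nat) (hμ : IsPartition μ)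
    (i : Nat) (hi2 : 2 ≤ i) (his : i ≤ μ.length)
    (hlt : μ.getD (i - 1) 0 < μ.getD (i - 2) 0) :
    f (subHat 1 μ) ≤ f (subHat 1 (upAt i μ))
      ∧ (f (subHat 1 (upAt i μ)) = f (subHat 1 μ) ↔
        (μ.getD 0 0 = 3 ∧ (∀ t : Nat, 2 ≤ t → t + 1 ≤ i → μ.getD (t - 1) 0 = 2)
          ∧ (∀ t : Nat, i ≤ t → t ≤ μ.length → μ.getD (t - 1) 0 = 1))) := by
  obtain ⟨a, A, b, B, rfl, rfl, hab⟩ := hμ.exists_cons_append_cons hi2 his hlt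
  have hf : IsPosAwayFromOne f :=
    SatisfiesRecursion.isPosAwayFromOne hfr (by rw [hf0]; exact one_pos)
      (fun m hm => hf1 m ▸ pos_of_ne_one_of_recurrence hd0 hd1 hd m hm) (by rw [hf1, hd1])
  have hbump :=
    SatisfiesRecursion.subHat_one_bump_le_and_eq_iff hfr hf (List.cons_ne_nil a A) hab hμ
  have hb : 0 < b := hμ.pos (by simp)
  rw [subHat_two_eq_singleton_one_iff
    (isPartition_iff_pairwise.mp (hμ.of_append_left (l₁ := a :: A) (l₂ := b :: B))).1
    (fun x hx => by have := hab x (List.mem_cons_of_mem a hx); omega)] at hbump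
  have hup : upAt (A.length + 2) (a :: (A ++ b :: B)) = a :: (A ++ (b + 1) :: B) := by
    simp [upAt]
  rw [hup, List.getD_cons_zero, forall_getD_cons_append_eq_iff,
    forall_getD_cons_append_right_eq_iff, hμ.forall_mem_cons_eq_one_iff (A := a :: A)]
  exact ⟨hbump.1, hbump.2.trans (by tauto)⟩

theorem stmt9
    (d : Nat → Int) (hd0 : d 0 = 1) (hd1 : d 1 = 0)
    (hd : ∀ n : Nat, 2 ≤ n → d n = 2 * ((n : Int) - 1) * (d (n - 1) + d (n - 2)))
    (f : List Nat → Int) (hf0 : f [] = 1) (hf1 : ∀ m : Nat, f [m] = d m)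
    (hfr : ∀ l : List Nat, IsPartition l → 2 ≤ l.length →
      f l = f l.dropLast + ∑ k ∈ Finset.Icc 1 (l.getLastD 0),
        ((l.getLastD 0).choose k : Int) * odf k * f (subHat k l.dropLast))
    (μ : List Nat) (hμ : IsPartition μ) (hs : 2 ≤ μ.length)
    (i : Nat) (hi2 : 2 ≤ i) (his : i ≤ μ.length)
    (hlt : μ.getD (i - 1) 0 < μ.getD (i - 2) 0) :
    f (subHat 1 μ) ≤ f (subHat 1 (upAt i μ))
      ∧ (f (subHat 1 (upAt i μ)) = f (subHat 1 μ) ↔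
        (μ.getD 0 0 = 3 ∧ (∀ t : Nat, 2 ≤ t → t + 1 ≤ i → μ.getD (t - 1) 0 = 2)
          ∧ (∀ t : Nat, i ≤ t → t ≤ μ.length → μ.getD (t - 1) 0 = 1))) :=
  stmt9_general d hd0 hd1 hd f hf0 hf1 hfr μ hμ i hi2 his hlt
end

section
/- For all u, q ≥ 1, f((u+2)^q, 1) = (2u + q + 1) f((u+1)^q, 1) + 2u f(u^q, 1), where (v^q, 1) denotes the partition with q parts equal to v followed by one part equal to 1. -/
/-!
Write `A_p(v) = f(v^p)`, with `A_p(0) = 1`. Peeling the last part of `v^(p+1)` shows that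
`A_(p+1)` is the binomial convolution of `A_p` with `(2k-1)!!`, i.e. on exponential generating
functions multiplication by `(1 - 2x)^(-1/2)`. That multiplication turns `(1 - 2x) A' = (c + 2x) A`
into the same equation with `c + 1`, so from the recurrence of `d = A_1` we get
`A_p(v+1) = (2v + p - 1) A_p(v) + 2v A_p(v-1)` for every `p ≥ 1`. Peeling the last part of
`(v^q, 1)` gives `f(v^q, 1) = A_q(v) + A_q(v-1)`, and the sum of the recurrences at `v = u + 1`
and `v = u` is the identity.
-/

open Finset

lemma odf_succ (k : ℕ) : odf (k + 1) = (2 * k + 1) * odf k := by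
  rw [odf, prod_Icc_succ_top (by omega), ← odf]
  push_cast
  ring

def odfConv (a : ℕ → ℤ) (n : ℕ) : ℤ :=
  ∑ k ∈ range (n + 1), (n.choose k : ℤ) * odf k * a (n - k)

def HasTwoTermRec (c : ℤ) (a : ℕ → ℤ) : Prop :=
  ∀ m : ℕ, a (m + 1) = (2 * m + c) * a m + 2 * m * a (m - 1)

lemma sum_range_choose_mul_sub {R : Type*} [CommSemiring R] (g : ℕ → R) (n : ℕ) :
    ∑ k ∈ range (n + 2), ((n + 1).choose k : R) * ((n + 1 - k : ℕ) : R) * g k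
      = (n + 1) * ∑ k ∈ range (n + 1), (n.choose k : R) * g k := by
  rw [sum_range_succ, Nat.sub_self, Nat.cast_zero, mul_zero, zero_mul, add_zero, mul_sum]
  refine sum_congr rfl fun k _ => ?_
  have h := congrArg (Nat.cast (R := R)) (Nat.choose_mul_succ_eq n k)
  rw [Nat.cast_mul, Nat.cast_mul, Nat.cast_succ] at h
  rw [← h]
  ring

theorem hasTwoTermRec_odfConv {c : ℤ} {a : ℕ → ℤ} (ha : HasTwoTermRec c a) :
    HasTwoTermRec (c + 1) (odfConv a) := by
  intro n
  -- `2k + 1` from `odf_succ` and `2(n - k) + c` from the recurrence add up to `2n + c + 1`.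
  have hterm : ∀ k ∈ range (n + 1),
      odf (k + 1) * a (n - k) + odf k * a (n + 1 - k)
        = (2 * n + (c + 1)) * (odf k * a (n - k))
          + 2 * ((n - k : ℕ) : ℤ) * (odf k * a (n - 1 - k)) := by
    intro k hk
    have hkn : k ≤ n := Nat.lt_succ_iff.mp (mem_range.mp hk)
    rw [odf_succ, Nat.sub_add_comm hkn, ha (n - k), Nat.sub_right_comm, Nat.cast_sub hkn]
    ring
  have hleibniz : odfConv a (n + 1) = ∑ k ∈ range (n + 1),
      (n.choose k : ℤ) * (odf (k + 1) * a (n - k) + odf k * a (n + 1 - k)) := by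
    simp only [odfConv, mul_assoc]
    rw [sum_choose_succ_mul (fun i j => odf i * a j), ← sum_add_distrib]
    simp only [mul_add, add_comm]
  have hshift :
      ∑ k ∈ range (n + 1), (n.choose k : ℤ) * ((n - k : ℕ) : ℤ) * (odf k * a (n - 1 - k))
        = n * odfConv a (n - 1) := by
    rcases n with _ | m
    · simp
    · simpa [odfConv, mul_assoc, Nat.sub_right_comm _ 1] using
        sum_range_choose_mul_sub (fun k => odf k * a (m - k)) m
  rw [hleibniz, sum_congr rfl fun k hk => by rw [hterm k hk], mul_assoc 2, ← hshift, odfConv,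
    mul_sum, mul_sum, ← sum_add_distrib]
  exact sum_congr rfl fun k _ => by ring

lemma hasTwoTermRec_zero {d : ℕ → ℤ} (hd1 : d 1 = 0)
    (hd : ∀ n : ℕ, 2 ≤ n → d n = 2 * ((n : ℤ) - 1) * (d (n - 1) + d (n - 2))) :
    HasTwoTermRec 0 d := by
  rintro (_ | m)
  · simp [hd1]
  · rw [hd (m + 2) (by omega)]
    push_cast
    ring

-- The rectangular partition `v^p`, taken to be empty when `v = 0`.
def rect (p v : ℕ) : List ℕ := (List.replicate p v).filter (· ≠ 0)

lemma rect_zero (p : ℕ) : rect p 0 = [] := by simp [rect]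

lemma rect_of_pos {v : ℕ} (hv : 0 < v) (p : ℕ) : rect p v = List.replicate p v := by
  simp [rect, hv.ne']

lemma subHat_replicate (k p v : ℕ) : subHat k (List.replicate p v) = rect p (v - k) := by
  simp [subHat, rect, List.map_replicate]

lemma isPartition_replicate_append {p v w : ℕ} (hwv : w ≤ v) (hw : 0 < w) :
    IsPartition (List.replicate p v ++ [w]) := by
  refine ⟨List.isChain_append.mpr
    ⟨List.isChain_replicate_of_rel p le_rfl, List.isChain_singleton w, ?_⟩, ?_⟩
  · intro x hx y hy
    simp [List.getLast?_replicate] at hx hy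
    omega
  · intro x hx
    simp at hx
    omega

def LastPartRecursion (f : List ℕ → ℤ) : Prop :=
  ∀ l : List ℕ, IsPartition l → 2 ≤ l.length →
    f l = f l.dropLast + ∑ k ∈ Icc 1 (l.getLastD 0),
      ((l.getLastD 0).choose k : ℤ) * odf k * f (subHat k l.dropLast)

namespace LastPartRecursion

variable {f : List ℕ → ℤ}

lemma replicate_append (hf : LastPartRecursion f) {p v w : ℕ} (hp : 1 ≤ p) (hwv : w ≤ v)
    (hw : 0 < w) :
    f (List.replicate p v ++ [w])
      = f (List.replicate p v)
        + ∑ k ∈ Icc 1 w, (w.choose k : ℤ) * odf k * f (rect p (v - k)) := by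
  have h := hf _ (isPartition_replicate_append hwv hw) (by simp; omega)
  simpa [List.getLastD_concat, List.dropLast_concat, subHat_replicate] using h

lemma rect_succ (hf : LastPartRecursion f) {p : ℕ} (hp : 1 ≤ p) (v : ℕ) :
    f (rect (p + 1) v) = odfConv (fun w => f (rect p w)) v := by
  rcases Nat.eq_zero_or_pos v with rfl | hv
  · simp [rect_zero, odfConv, odf]
  rw [rect_of_pos hv, List.replicate_succ', hf.replicate_append hp le_rfl hv, odfConv,
    range_eq_Ico, sum_eq_sum_Ico_succ_bot (by omega), Ico_add_one_right_eq_Icc]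
  simp [odf, rect_of_pos hv]

lemma replicate_append_one (hf : LastPartRecursion f) {p v : ℕ} (hp : 1 ≤ p) (hv : 0 < v) :
    f (List.replicate p v ++ [1]) = f (rect p v) + f (rect p (v - 1)) := by
  rw [hf.replicate_append hp hv Nat.one_pos, rect_of_pos hv]
  simp [odf]

end LastPartRecursion

section

variable {d : ℕ → ℤ} {f : List ℕ → ℤ}

lemma rect_one (hd0 : d 0 = 1) (hf0 : f [] = 1) (hf1 : ∀ m : ℕ, f [m] = d m) (v : ℕ) :
    f (rect 1 v) = d v := by
  rcases Nat.eq_zero_or_pos v with rfl | hv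
  · rw [rect_zero, hf0, hd0]
  · rw [rect_of_pos hv, List.replicate_one, hf1]

theorem hasTwoTermRec_rect (hd0 : d 0 = 1) (hd1 : d 1 = 0)
    (hd : ∀ n : ℕ, 2 ≤ n → d n = 2 * ((n : ℤ) - 1) * (d (n - 1) + d (n - 2)))
    (hf0 : f [] = 1) (hf1 : ∀ m : ℕ, f [m] = d m) (hf : LastPartRecursion f) (p : ℕ) :
    HasTwoTermRec p (fun v => f (rect (p + 1) v)) := by
  induction p with
  | zero => simpa [rect_one hd0 hf0 hf1] using hasTwoTermRec_zero hd1 hd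
  | succ p ih =>
    have h := hasTwoTermRec_odfConv ih
    rw [← funext (hf.rect_succ (Nat.le_add_left 1 p)), ← Nat.cast_succ] at h
    exact h

end

theorem stmt15
    (d : Nat → Int) (hd0 : d 0 = 1) (hd1 : d 1 = 0)
    (hd : ∀ n : Nat, 2 ≤ n → d n = 2 * ((n : Int) - 1) * (d (n - 1) + d (n - 2)))
    (f : List Nat → Int) (hf0 : f [] = 1) (hf1 : ∀ m : Nat, f [m] = d m)
    (hfr : ∀ l : List Nat, IsPartition l → 2 ≤ l.length →
      f l = f l.dropLast + ∑ k ∈ Finset.Icc 1 (l.getLastD 0),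
        ((l.getLastD 0).choose k : Int) * odf k * f (subHat k l.dropLast)) :
    ∀ u q : Nat, 1 ≤ u → 1 ≤ q →
      f (List.replicate q (u + 2) ++ [1])
        = (2 * (u : Int) + (q : Int) + 1) * f (List.replicate q (u + 1) ++ [1])
          + 2 * (u : Int) * f (List.replicate q u ++ [1]) := by
  intro u q hu hq
  obtain ⟨p, rfl⟩ : ∃ p, q = p + 1 := ⟨q - 1, by omega⟩
  have hrec := hasTwoTermRec_rect hd0 hd1 hd hf0 hf1 hfr p
  have hcol (v : ℕ) (hv : 0 < v) := LastPartRecursion.replicate_append_one hfr hq hv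
  rw [hcol (u + 2) (by omega), hcol (u + 1) (by omega), hcol u hu]
  have h1 := hrec (u + 1)
  have h0 := hrec u
  simp only [Nat.add_sub_cancel, Nat.add_succ_sub_one] at h1 h0 ⊢
  push_cast at h1 h0 ⊢
  linear_combination h1 + h0
end
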